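/- arXiv:1412.6899 — 3 statements merged into one kernel-verified Lean document; each statement's English description precedes it below -/
import Mathlib

section
/- Let S/R be relative Frobenius of rank n and R → R' any ring homomorphism. Then (R' ⊗_R S)/R' is relative Frobenius of rank n. -/
open scoped TensorProduct

/-- For commutative rings `R → S`, the pair `S/R` is **relative Frobenius of rank `n`** if
`S` is free of rank `n` as an `R`-module and `Hom_R(S,R) ≅ S` as `S`-modules; the latter is
phrased as the existence of `l : S →ₗ[R] R` for which `s ↦ (x ↦ l (s * x))` is bijective. -/
def IsRelativeFrobenius (R S : Type*) [CommRing R] [CommRing S] [Algebra R S]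
    (n : ℕ) : Prop :=
  Nonempty (Module.Basis (Fin n) R S) ∧
    ∃ l : S →ₗ[R] R, Function.Bijective fun s : S => l ∘ₗ LinearMap.mul R S s

/-! For a basis `b` of `S`, the map `s ↦ l ∘ (s * ·)` is bijective exactly when the Gram matrix
`(l (bᵢ bⱼ))` has a unit determinant. Base-changing `b` and `l` to `R'` maps this matrix
entrywise along `R → R'`, and ring homomorphisms send units to units. -/

open Module

section LinearAlgebra

variable {R M M' ι : Type*} [CommRing R] [AddCommGroup M] [Module R M] [AddCommGroup M']
  [Module R M'] [Fintype ι] [DecidableEq ι]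

theorem LinearMap.bijective_iff_isUnit_det_toMatrix (v : Basis ι R M) (v' : Basis ι R M')
    (f : M →ₗ[R] M') : Function.Bijective f ↔ IsUnit (LinearMap.toMatrix v v' f).det :=
  ⟨fun hf => (LinearEquiv.ofBijective f hf).isUnit_det v v', fun hf =>
    (LinearEquiv.ofIsUnitDet hf).bijective⟩

theorem LinearMap.toMatrix_dualBasis (b : Basis ι R M) (B : M →ₗ[R] M →ₗ[R] R) :
    LinearMap.toMatrix b b.dualBasis B = (LinearMap.toMatrix₂ b b B).transpose := by
  ext i j
  rw [LinearMap.toMatrix_apply, Basis.dualBasis_repr, Matrix.transpose_apply,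
    LinearMap.toMatrix₂_apply]

theorem LinearMap.bijective_iff_isUnit_det_toMatrix₂ (b : Basis ι R M)
    (B : M →ₗ[R] M →ₗ[R] R) : Function.Bijective B ↔ IsUnit (LinearMap.toMatrix₂ b b B).det := by
  rw [LinearMap.bijective_iff_isUnit_det_toMatrix b b.dualBasis, LinearMap.toMatrix_dualBasis,
    Matrix.det_transpose]

end LinearAlgebra

section Algebra

variable {R S ι : Type*} [CommRing R] [CommRing S] [Algebra R S]

theorem bijective_comp_mul_iff_isUnit_det [Fintype ι] [DecidableEq ι] (b : Basis ι R S)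
    (l : Dual R S) :
    Function.Bijective (fun s : S => l ∘ₗ LinearMap.mul R S s) ↔
      IsUnit (Matrix.of fun i j => l (b i * b j)).det := by
  have gram : LinearMap.toMatrix₂ b b ((LinearMap.mul R S).compr₂ l) =
      Matrix.of fun i j => l (b i * b j) := by
    ext i j
    rw [LinearMap.toMatrix₂_apply, LinearMap.compr₂_apply, LinearMap.mul_apply', Matrix.of_apply]
  exact gram ▸ LinearMap.bijective_iff_isUnit_det_toMatrix₂ b ((LinearMap.mul R S).compr₂ l)

theorem Module.Dual.baseChange_basis_mul (R' : Type*) [CommRing R'] [Algebra R R']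
    (b : Basis ι R S) (l : Dual R S) (i j : ι) :
    Dual.baseChange R' l (Algebra.TensorProduct.basis R' b i * Algebra.TensorProduct.basis R' b j) =
      algebraMap R R' (l (b i * b j)) := by
  rw [Algebra.TensorProduct.basis_apply, Algebra.TensorProduct.basis_apply,
    Algebra.TensorProduct.tmul_mul_tmul, one_mul, Module.Dual.baseChange_apply_tmul,
    Algebra.smul_def, mul_one]

end Algebra

/-- If `S/R` is relative Frobenius of rank `n` and `R → R'` is any ring homomorphism, then
`(R' ⊗_R S)/R'` is relative Frobenius of rank `n`. -/
theorem isRelativeFrobenius_baseChange (R S R' : Type*) [CommRing R] [CommRing S]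
    [Algebra R S] [CommRing R'] [Algebra R R'] (n : ℕ)
    (h : IsRelativeFrobenius R S n) :
    IsRelativeFrobenius R' (R' ⊗[R] S) n := by
  obtain ⟨⟨b⟩, l, hl⟩ := h
  let b' := Algebra.TensorProduct.basis R' b
  refine ⟨⟨b'⟩, Dual.baseChange R' l, ?_⟩
  rw [bijective_comp_mul_iff_isUnit_det b] at hl
  have gram_baseChange : (Matrix.of fun i j => Dual.baseChange R' l (b' i * b' j)) =
      (Matrix.of fun i j => l (b i * b j)).map (algebraMap R R') :=
    Matrix.ext (Module.Dual.baseChange_basis_mul R' b l)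
  rw [bijective_comp_mul_iff_isUnit_det b', gram_baseChange, ← RingHom.mapMatrix_apply,
    ← RingHom.map_det]
  exact hl.map (algebraMap R R')
end

section
/- Let R̃ = ℤ[a_1,b_1,c_1,d_1,a_2,b_2,c_2,d_2] localized at f = 1 − d_1 d_2, and let S̃ = R̃[s,t]/(a_1 + b_1 s + c_1 t + d_1 st − s^2, a_2 + b_2 s + c_2 t + d_2 st − t^2). Then S̃ is a free R̃-module of rank 4 with basis (1, s, t, st), and letting λ : S̃ → R̃ be projection onto the coefficient of st, the Gram matrix (λ(e_i e_j)) has determinant 1 − d_1 d_2, which is invertible in R̃; hence S̃/R̃ is relative Frobenius of rank 4. -/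
set_option synthInstance.maxHeartbeats 1000000
set_option maxHeartbeats 1000000

noncomputable section

/-- `A = ℤ[a₁,b₁,c₁,d₁,a₂,b₂,c₂,d₂]`, with the variables indexed by `Fin 8` in this order:
`a₁ = X 0, b₁ = X 1, c₁ = X 2, d₁ = X 3, a₂ = X 4, b₂ = X 5, c₂ = X 6, d₂ = X 7`. -/
abbrev ZPoly := MvPolynomial (Fin 8) ℤ

/-- `f = 1 − d₁d₂`. -/
abbrev fElt : ZPoly := 1 - MvPolynomial.X 3 * MvPolynomial.X 7

variable (Rt : Type) [CommRing Rt] [Algebra ZPoly Rt]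

/-- The ideal `(a₁ + b₁s + c₁t + d₁st − s², a₂ + b₂s + c₂t + d₂st − t²)` of `R̃[s,t]`,
with `s = X 0`, `t = X 1`. -/
abbrev StIdeal : Ideal (MvPolynomial (Fin 2) Rt) :=
  Ideal.span
    { (MvPolynomial.C (algebraMap ZPoly Rt (MvPolynomial.X 0)) +
        MvPolynomial.C (algebraMap ZPoly Rt (MvPolynomial.X 1)) * MvPolynomial.X 0 +
        MvPolynomial.C (algebraMap ZPoly Rt (MvPolynomial.X 2)) * MvPolynomial.X 1 +
        MvPolynomial.C (algebraMap ZPoly Rt (MvPolynomial.X 3)) *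
          (MvPolynomial.X 0 * MvPolynomial.X 1) -
        (MvPolynomial.X 0) ^ 2 : MvPolynomial (Fin 2) Rt),
      (MvPolynomial.C (algebraMap ZPoly Rt (MvPolynomial.X 4)) +
        MvPolynomial.C (algebraMap ZPoly Rt (MvPolynomial.X 5)) * MvPolynomial.X 0 +
        MvPolynomial.C (algebraMap ZPoly Rt (MvPolynomial.X 6)) * MvPolynomial.X 1 +
        MvPolynomial.C (algebraMap ZPoly Rt (MvPolynomial.X 7)) *
          (MvPolynomial.X 0 * MvPolynomial.X 1) -
        (MvPolynomial.X 1) ^ 2 : MvPolynomial (Fin 2) Rt) }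

/-- `S̃ = R̃[s,t]/(a₁ + b₁s + c₁t + d₁st − s², a₂ + b₂s + c₂t + d₂st − t²)`. -/
abbrev St := MvPolynomial (Fin 2) Rt ⧸ StIdeal Rt
/-!
In the basis `(1, s, t, st)`, multiplication by `s` and by `t` is given by two `4 × 4` matrices
whose entries are polynomial except for the coordinates of `s²t` and `st²`, which involve
`(1 − d₁d₂)⁻¹`. These matrices commute and satisfy both relations, so `S̃` acts on `R̃⁴` through
them, and evaluating the action at the first basis vector inverts `x ↦ x₀ + x₁s + x₂t + x₃st`; that
this map is onto is the statement that multiplication by `s` and `t` preserves its image. The Gram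
matrix of `λ` in this basis consists of the last rows of the matrices of multiplication by
`1, s, t, st`, and its determinant is `1 − d₁d₂`.
-/

open MvPolynomial Matrix
open scoped IsMulCommutative

theorem Module.Basis.bijective_comp_mul_of_isUnit_det {ι R S : Type*} [Fintype ι]
    [DecidableEq ι] [CommRing R] [CommRing S] [Algebra R S] (b : Module.Basis ι R S)
    (l : S →ₗ[R] R) (h : IsUnit (Matrix.of fun i j => l (b i * b j)).det) :
    Function.Bijective fun s : S => l ∘ₗ LinearMap.mul R S s := by
  let T : S →ₗ[R] S →ₗ[R] R := LinearMap.llcomp R S S R l ∘ₗ LinearMap.mul R S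
  have hT : LinearMap.toMatrix b b.dualBasis T = Matrix.of fun i j => l (b i * b j) := by
    ext i j
    rw [LinearMap.toMatrix_apply, Module.Basis.dualBasis_repr, Matrix.of_apply, mul_comm]
    rfl
  rw [← hT] at h
  exact (LinearEquiv.ofIsUnitDet h).bijective

theorem Matrix.det_fin_four_corner_ones {R : Type*} [CommRing R] (p q x y x' y' z : R) :
    (!![0, 0, 0, 1; 0, p, 1, x; 0, 1, q, y; 1, x', y', z] : Matrix (Fin 4) (Fin 4) R).det =
      1 - p * q := by
  simp [det_succ_row_zero, Fin.sum_univ_succ, Fin.succAbove_of_lt_succ,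
    Fin.succAbove_of_castSucc_lt]
  ring

section Biquadratic

-- `k = (a₁, b₁, c₁, d₁, a₂, b₂, c₂, d₂)`, indexed as the variables of `ZPoly`
variable {R : Type*} [CommRing R] (k : Fin 8 → R)

def BiquadAlg.relS : MvPolynomial (Fin 2) R :=
  C (k 0) + C (k 1) * X 0 + C (k 2) * X 1 + C (k 3) * (X 0 * X 1) - X 0 ^ 2

def BiquadAlg.relT : MvPolynomial (Fin 2) R :=
  C (k 4) + C (k 5) * X 0 + C (k 6) * X 1 + C (k 7) * (X 0 * X 1) - X 1 ^ 2

abbrev BiquadAlg := MvPolynomial (Fin 2) R ⧸ Ideal.span {BiquadAlg.relS k, BiquadAlg.relT k}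

namespace BiquadAlg

abbrev gen (i : Fin 2) : BiquadAlg k := Ideal.Quotient.mk _ (X i)

def monomials : Fin 4 → BiquadAlg k := ![1, gen k 0, gen k 1, gen k 0 * gen k 1]

/- Solving `s²t = a₁t + b₁st + c₁t² + d₁ · st²` and `st² = a₂s + b₂s² + c₂st + d₂ · s²t`,
with `s²` and `t²` expanded by the relations. -/
def sSqTCoords : Fin 4 → R := Ring.inverse (1 - k 3 * k 7) •
  (![k 2 * k 4, k 2 * k 5, k 0 + k 2 * k 6, k 1 + k 2 * k 7] +
    k 3 • ![k 0 * k 5, k 4 + k 1 * k 5, k 2 * k 5, k 6 + k 3 * k 5])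

def sTSqCoords : Fin 4 → R := Ring.inverse (1 - k 3 * k 7) •
  (![k 0 * k 5, k 4 + k 1 * k 5, k 2 * k 5, k 6 + k 3 * k 5] +
    k 7 • ![k 2 * k 4, k 2 * k 5, k 0 + k 2 * k 6, k 1 + k 2 * k 7])

/-- Multiplication by `s` and by `t` in the basis `(1, s, t, st)`, written by columns. -/
def genMatrix : Fin 2 → Matrix (Fin 4) (Fin 4) R :=
  ![(of ![Pi.single 1 1, ![k 0, k 1, k 2, k 3], Pi.single 3 1, sSqTCoords k])ᵀ,
    (of ![Pi.single 2 1, Pi.single 3 1, ![k 4, k 5, k 6, k 7], sTSqCoords k])ᵀ]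

def mulMatrix : Fin 4 → Matrix (Fin 4) (Fin 4) R :=
  ![1, genMatrix k 0, genMatrix k 1, genMatrix k 0 * genMatrix k 1]

variable {k}

theorem gen_zero_sq : gen k 0 ^ 2 = algebraMap R _ (k 0) + algebraMap R _ (k 1) * gen k 0 +
    algebraMap R _ (k 2) * gen k 1 + algebraMap R _ (k 3) * (gen k 0 * gen k 1) := by
  have h : Ideal.Quotient.mk (Ideal.span {relS k, relT k})
      (C (k 0) + C (k 1) * X 0 + C (k 2) * X 1 + C (k 3) * (X 0 * X 1) - X 0 ^ 2) = 0 :=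
    Ideal.Quotient.eq_zero_iff_mem.2 (Ideal.subset_span (Set.mem_insert _ _))
  simp only [← MvPolynomial.algebraMap_eq, map_sub, map_add, map_mul, map_pow,
    Ideal.Quotient.mk_algebraMap] at h
  linear_combination -h

theorem gen_one_sq : gen k 1 ^ 2 = algebraMap R _ (k 4) + algebraMap R _ (k 5) * gen k 0 +
    algebraMap R _ (k 6) * gen k 1 + algebraMap R _ (k 7) * (gen k 0 * gen k 1) := by
  have h : Ideal.Quotient.mk (Ideal.span {relS k, relT k})
      (C (k 4) + C (k 5) * X 0 + C (k 6) * X 1 + C (k 7) * (X 0 * X 1) - X 1 ^ 2) = 0 :=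
    Ideal.Quotient.eq_zero_iff_mem.2 (Ideal.subset_span (Set.mem_insert_of_mem _ rfl))
  simp only [← MvPolynomial.algebraMap_eq, map_sub, map_add, map_mul, map_pow,
    Ideal.Quotient.mk_algebraMap] at h
  linear_combination -h

theorem genMatrix_comm (hw : IsUnit (1 - k 3 * k 7)) :
    genMatrix k 0 * genMatrix k 1 = genMatrix k 1 * genMatrix k 0 := by
  have := Ring.inverse_mul_cancel _ hw
  ext i j
  fin_cases i <;> fin_cases j <;>
    simp [genMatrix, mul_apply, Fin.sum_univ_four, sSqTCoords, sTSqCoords] <;>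
    grind

theorem genMatrix_relS (hw : IsUnit (1 - k 3 * k 7)) :
    algebraMap R _ (k 0) + algebraMap R _ (k 1) * genMatrix k 0 +
      algebraMap R _ (k 2) * genMatrix k 1 +
      algebraMap R _ (k 3) * (genMatrix k 0 * genMatrix k 1) - genMatrix k 0 ^ 2 = 0 := by
  have := Ring.inverse_mul_cancel _ hw
  ext i j
  fin_cases i <;> fin_cases j <;>
    simp [genMatrix, mul_apply, Fin.sum_univ_four, sSqTCoords, sTSqCoords, sq,
      algebraMap_eq_diagonal, Pi.algebraMap_apply, diagonal_apply] <;>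
    grind

theorem genMatrix_relT (hw : IsUnit (1 - k 3 * k 7)) :
    algebraMap R _ (k 4) + algebraMap R _ (k 5) * genMatrix k 0 +
      algebraMap R _ (k 6) * genMatrix k 1 +
      algebraMap R _ (k 7) * (genMatrix k 0 * genMatrix k 1) - genMatrix k 1 ^ 2 = 0 := by
  have := Ring.inverse_mul_cancel _ hw
  ext i j
  fin_cases i <;> fin_cases j <;>
    simp [genMatrix, mul_apply, Fin.sum_univ_four, sSqTCoords, sTSqCoords, sq,
      algebraMap_eq_diagonal, Pi.algebraMap_apply, diagonal_apply] <;>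
    grind

theorem linearCombination_genMatrix_mulVec (hw : IsUnit (1 - k 3 * k 7)) (i : Fin 2)
    (x : Fin 4 → R) :
    Fintype.linearCombination R (monomials k) (genMatrix k i *ᵥ x) =
      gen k i * Fintype.linearCombination R (monomials k) x := by
  suffices Fintype.linearCombination R (monomials k) ∘ₗ (genMatrix k i).mulVecLin =
      LinearMap.mulLeft R (gen k i) ∘ₗ Fintype.linearCombination R (monomials k) from
    LinearMap.congr_fun this x
  have hs := gen_zero_sq (k := k)
  have ht := gen_one_sq (k := k)
  have hinv := congrArg (algebraMap R (BiquadAlg k)) (Ring.inverse_mul_cancel _ hw)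
  simp only [map_mul, map_sub, map_one] at hinv
  -- `simp [Algebra.smul_def]` does not see the quotient's `R`-action as an algebra action
  have hsmul (r : R) (y : BiquadAlg k) : r • y = algebraMap R _ r * y := Algebra.smul_def r y
  refine (Pi.basisFun R (Fin 4)).ext fun j => ?_
  fin_cases i <;> fin_cases j <;>
    simp [Fintype.linearCombination_apply, Fin.sum_univ_four, genMatrix, monomials, sSqTCoords,
      sTSqCoords, hsmul, Pi.single_apply] <;>
    grind

theorem linearCombination_mulMatrix_mulVec (hw : IsUnit (1 - k 3 * k 7)) (i : Fin 4)
    (x : Fin 4 → R) :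
    Fintype.linearCombination R (monomials k) (mulMatrix k i *ᵥ x) =
      monomials k i * Fintype.linearCombination R (monomials k) x := by
  fin_cases i
  · simp [mulMatrix, monomials]
  · exact linearCombination_genMatrix_mulVec hw 0 x
  · exact linearCombination_genMatrix_mulVec hw 1 x
  · change Fintype.linearCombination R (monomials k) ((genMatrix k 0 * genMatrix k 1) *ᵥ x) =
      gen k 0 * gen k 1 * _
    rw [← mulVec_mulVec, linearCombination_genMatrix_mulVec hw,
      linearCombination_genMatrix_mulVec hw, mul_assoc]

theorem linearCombination_surjective (hw : IsUnit (1 - k 3 * k 7)) :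
    Function.Surjective (Fintype.linearCombination R (monomials k)) := by
  intro y
  obtain ⟨p, rfl⟩ := Ideal.Quotient.mk_surjective y
  induction p using MvPolynomial.induction_on with
  | C r =>
    refine ⟨Pi.single 0 r, ?_⟩
    rw [Fintype.linearCombination_apply_single, ← MvPolynomial.algebraMap_eq,
      Ideal.Quotient.mk_algebraMap]
    exact (Algebra.algebraMap_eq_smul_one r).symm
  | add p q hp hq =>
    obtain ⟨x, hx⟩ := hp
    obtain ⟨x', hx'⟩ := hq
    exact ⟨x + x', by rw [map_add, hx, hx', map_add]⟩
  | mul_X p i hp =>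
    obtain ⟨x, hx⟩ := hp
    exact ⟨genMatrix k i *ᵥ x, by
      rw [linearCombination_genMatrix_mulVec hw, hx, map_mul, mul_comm]⟩

theorem linearCombination_injective (hw : IsUnit (1 - k 3 * k 7)) :
    Function.Injective (Fintype.linearCombination R (monomials k)) := by
  have hcomm : ∀ a ∈ Set.range (genMatrix k), ∀ b ∈ Set.range (genMatrix k), a * b = b * a := by
    rintro _ ⟨i, rfl⟩ _ ⟨j, rfl⟩
    fin_cases i <;> fin_cases j <;> simp [genMatrix_comm hw]
  have := Algebra.isMulCommutative_adjoin R hcomm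
  let A := Algebra.adjoin R (Set.range (genMatrix k))
  let act : MvPolynomial (Fin 2) R →ₐ[R] A :=
    aeval fun i => ⟨genMatrix k i, Algebra.subset_adjoin (Set.mem_range_self i)⟩
  have hker : ∀ p ∈ Ideal.span {relS k, relT k}, act p = 0 := by
    refine fun p hp => (Ideal.span_le (I := RingHom.ker act)).2 ?_ hp
    simp only [Set.insert_subset_iff, Set.singleton_subset_iff, SetLike.mem_coe, RingHom.mem_ker]
    constructor <;> apply Subtype.ext
    · simpa [relS, act] using genMatrix_relS hw
    · simpa [relT, act] using genMatrix_relT hw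
  let ρ := Ideal.Quotient.liftₐ _ act hker
  have hρ (p : MvPolynomial (Fin 2) R) : ρ (Ideal.Quotient.mk _ p) = act p := rfl
  let coords : BiquadAlg k →ₗ[R] (Fin 4 → R) := LinearMap.applyₗ (Pi.single 0 1) ∘ₗ
    Matrix.toLin'.toLinearMap ∘ₗ A.val.toLinearMap ∘ₗ ρ.toLinearMap
  suffices coords ∘ₗ Fintype.linearCombination R (monomials k) = LinearMap.id from
    Function.LeftInverse.injective (g := coords) (LinearMap.congr_fun this)
  refine (Pi.basisFun R (Fin 4)).ext fun j => ?_
  fin_cases j <;> simp [coords, hρ, act, monomials, gen, genMatrix]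

def basis (hw : IsUnit (1 - k 3 * k 7)) : Module.Basis (Fin 4) R (BiquadAlg k) :=
  .ofEquivFun (LinearEquiv.ofBijective _
    ⟨linearCombination_injective hw, linearCombination_surjective hw⟩).symm

theorem coe_basis (hw : IsUnit (1 - k 3 * k 7)) : ⇑(basis hw) = monomials k := by
  ext i
  rw [basis, Module.Basis.coe_ofEquivFun, LinearEquiv.symm_symm]
  exact (Fintype.linearCombination_apply_single R (monomials k) i 1).trans (one_smul R _)

theorem basis_coord_linearCombination (hw : IsUnit (1 - k 3 * k 7)) (i : Fin 4)
    (x : Fin 4 → R) : (basis hw).coord i (Fintype.linearCombination R (monomials k) x) = x i := by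
  rw [Module.Basis.coord_apply, basis, Module.Basis.ofEquivFun_repr_apply]
  exact congrFun ((LinearEquiv.ofBijective _ _).symm_apply_apply x) i

theorem basis_coord_three_mul (hw : IsUnit (1 - k 3 * k 7)) (i j : Fin 4) :
    (basis hw).coord 3 (basis hw i * basis hw j) = mulMatrix k i 3 j := by
  rw [coe_basis,
    ← (Fintype.linearCombination_apply_single R (monomials k) j 1).trans (one_smul _ _),
    ← linearCombination_mulMatrix_mulVec hw, basis_coord_linearCombination, mulVec_single_one]
  rfl

theorem det_gram (hw : IsUnit (1 - k 3 * k 7)) :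
    (of fun i j : Fin 4 => (basis hw).coord 3 (basis hw i * basis hw j)).det = 1 - k 3 * k 7 := by
  have : (of fun i j : Fin 4 => (basis hw).coord 3 (basis hw i * basis hw j)) =
      !![0, 0, 0, 1; 0, k 3, 1, sSqTCoords k 3; 0, 1, k 7, sTSqCoords k 3;
        1, mulMatrix k 3 3 1, mulMatrix k 3 3 2, mulMatrix k 3 3 3] := by
    ext i j
    rw [of_apply, basis_coord_three_mul]
    fin_cases i <;> fin_cases j
    all_goals try rfl
    simp [mulMatrix, genMatrix, mul_apply, Fin.sum_univ_four]
  rw [this, det_fin_four_corner_ones]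

theorem exists_basis_frobenius (k : Fin 8 → R) (hw : IsUnit (1 - k 3 * k 7)) :
    ∃ b : Module.Basis (Fin 4) R (BiquadAlg k), ⇑b = monomials k ∧
      (of fun i j : Fin 4 => b.coord 3 (b i * b j)).det = 1 - k 3 * k 7 ∧
      ∃ l : BiquadAlg k →ₗ[R] R,
        Function.Bijective fun s : BiquadAlg k => l ∘ₗ LinearMap.mul R _ s :=
  ⟨basis hw, coe_basis hw, det_gram hw, _,
    (basis hw).bijective_comp_mul_of_isUnit_det _ (by rwa [det_gram hw])⟩

end BiquadAlg

end Biquadratic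

/-- Let `R̃` be (any realization of) the localization of `ℤ[a₁,…,d₂]` away from
`f = 1 − d₁d₂`, and `S̃ = R̃[s,t]/(a₁ + b₁s + c₁t + d₁st − s², a₂ + b₂s + c₂t + d₂st − t²)`.
Then `S̃` is free of rank 4 over `R̃` with basis `(1, s, t, st)`; with `λ` the projection
onto the `st`-coordinate, the Gram matrix `(λ(eᵢeⱼ))` has determinant the image of
`1 − d₁d₂`, which is invertible in `R̃`; hence `S̃/R̃` is relative Frobenius of rank 4:
`Hom_{R̃}(S̃,R̃)` has an `S̃`-module generator `l`. -/
theorem universal_relative_frobenius [IsLocalization.Away fElt Rt] :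
    ∃ b : Module.Basis (Fin 4) Rt (St Rt),
      ⇑b = ![1, Ideal.Quotient.mk (StIdeal Rt) (MvPolynomial.X 0),
            Ideal.Quotient.mk (StIdeal Rt) (MvPolynomial.X 1),
            Ideal.Quotient.mk (StIdeal Rt) (MvPolynomial.X 0) *
              Ideal.Quotient.mk (StIdeal Rt) (MvPolynomial.X 1)] ∧
      Matrix.det (Matrix.of fun i j : Fin 4 => b.coord 3 (b i * b j)) =
        algebraMap ZPoly Rt (1 - MvPolynomial.X 3 * MvPolynomial.X 7) ∧
      IsUnit (algebraMap ZPoly Rt (1 - MvPolynomial.X 3 * MvPolynomial.X 7)) ∧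
      ∃ l : St Rt →ₗ[Rt] Rt,
        Function.Bijective fun s : St Rt => l ∘ₗ LinearMap.mul Rt (St Rt) s := by
  have hf : IsUnit (algebraMap ZPoly Rt fElt) := IsLocalization.Away.algebraMap_isUnit fElt
  have hw : IsUnit (1 - algebraMap ZPoly Rt (MvPolynomial.X 3) *
      algebraMap ZPoly Rt (MvPolynomial.X 7)) := by
    simpa using hf
  obtain ⟨b, hb, hdet, hfrob⟩ :=
    BiquadAlg.exists_basis_frobenius (fun i => algebraMap ZPoly Rt (MvPolynomial.X i)) hw
  refine ⟨b, hb, hdet.trans ?_, hf, hfrob⟩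
  rw [map_sub, map_one, map_mul]

end
end

section
/- Let (R, m) be a local ring with residue field k, and let R → R̄ be a faithfully flat map to a local ring R̄ whose residue field is the algebraic closure of k. Let ι : A ↪ B be an injection of finitely generated R-modules with B projective. If ι ⊗_R R̄ : A ⊗ R̄ → B ⊗ R̄ is a split monomorphism, then ι is a split monomorphism. -/
/-!
Over the local ring `R`, a map from a finite module into a finite free one (and the projective
`B` is free) is a split injection as soon as it becomes injective modulo the maximal ideal.
Writing `k` and `K` for the residue fields of `R` and `R̄`, the splitting of `ι ⊗ R̄` survives
the further base change to `K`, so `ι ⊗ K = (ι ⊗ k) ⊗_k K` is injective, and since `K` is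
faithfully flat over the field `k`, so is `ι ⊗ k`.
-/

open scoped TensorProduct

namespace LinearMap

variable {R M N : Type*} (S T : Type*) [CommRing R] [CommRing S] [CommRing T]
  [Algebra R S] [Algebra S T] [Algebra R T] [IsScalarTower R S T]
  [AddCommGroup M] [Module R M] [AddCommGroup N] [Module R N]

theorem injective_baseChange_baseChange_iff (f : M →ₗ[R] N) :
    Function.Injective ((f.baseChange S).baseChange T) ↔ Function.Injective (f.baseChange T) := by
  rw [baseChange_baseChange]
  simp

theorem injective_baseChange_iff_of_faithfullyFlat [Module.FaithfullyFlat S T]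
    (f : M →ₗ[R] N) :
    Function.Injective (f.baseChange T) ↔ Function.Injective (f.baseChange S) := by
  rw [← Module.FaithfullyFlat.lTensor_injective_iff_injective S T, ← baseChange_eq_ltensor,
    injective_baseChange_baseChange_iff]

end LinearMap

theorem split_descends_along_residue_closure_general
    (R : Type*) [CommRing R] [IsLocalRing R]
    (Rbar : Type*) [CommRing Rbar] [IsLocalRing Rbar] [Algebra R Rbar]
    [IsLocalHom (algebraMap R Rbar)]
    (A B : Type*) [AddCommGroup A] [Module R A] [AddCommGroup B] [Module R B]
    [Module.Finite R A] [Module.Finite R B] [Module.Projective R B]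
    (ι : A →ₗ[R] B)
    (hsplit : ∃ π : TensorProduct R Rbar B →ₗ[Rbar] TensorProduct R Rbar A,
      π ∘ₗ ι.baseChange Rbar = LinearMap.id) :
    ∃ π : B →ₗ[R] A, π ∘ₗ ι = LinearMap.id := by
  have : Module.Free R B := Module.free_of_flat_of_isLocalRing
  rw [IsLocalRing.split_injective_iff_lTensor_residueField_injective,
    ← LinearMap.baseChange_eq_ltensor,
    ← ι.injective_baseChange_iff_of_faithfullyFlat (IsLocalRing.ResidueField R)
      (IsLocalRing.ResidueField Rbar),
    ← ι.injective_baseChange_baseChange_iff Rbar (IsLocalRing.ResidueField Rbar)]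
  obtain ⟨π, hπ⟩ := hsplit
  have hπK : π.baseChange (IsLocalRing.ResidueField Rbar) ∘ₗ
      (ι.baseChange Rbar).baseChange (IsLocalRing.ResidueField Rbar) = LinearMap.id := by
    rw [← LinearMap.baseChange_comp, hπ, LinearMap.baseChange_id]
  exact Function.LeftInverse.injective (LinearMap.congr_fun hπK)

/-- Let `(R, m)` be a local ring and `R → R̄` a faithfully flat local map to a local ring
`R̄` whose residue field is the algebraic closure of the residue field `k` of `R` (we
record that it is algebraically closed and algebraic over `k`).  Let `ι : A ↪ B` be an
injection of finitely generated `R`-modules with `B` projective.  If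
`ι ⊗_R R̄ : A ⊗ R̄ → B ⊗ R̄` is a split monomorphism, then `ι` is a split monomorphism. -/
theorem split_descends_along_residue_closure
    (R : Type*) [CommRing R] [IsLocalRing R]
    (Rbar : Type*) [CommRing Rbar] [IsLocalRing Rbar] [Algebra R Rbar]
    [Module.FaithfullyFlat R Rbar]
    [IsLocalHom (algebraMap R Rbar)]
    (halgclosed : IsAlgClosed (IsLocalRing.ResidueField Rbar))
    (halgebraic : ∀ x : IsLocalRing.ResidueField Rbar,
      ∃ p : Polynomial (IsLocalRing.ResidueField R), p ≠ 0 ∧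
        Polynomial.eval₂ (IsLocalRing.ResidueField.map (algebraMap R Rbar)) x p = 0)
    (A B : Type*) [AddCommGroup A] [Module R A] [AddCommGroup B] [Module R B]
    [Module.Finite R A] [Module.Finite R B] [Module.Projective R B]
    (ι : A →ₗ[R] B) (hinj : Function.Injective ι)
    (hsplit : ∃ π : TensorProduct R Rbar B →ₗ[Rbar] TensorProduct R Rbar A,
      π ∘ₗ ι.baseChange Rbar = LinearMap.id) :
    ∃ π : B →ₗ[R] A, π ∘ₗ ι = LinearMap.id :=
  split_descends_along_residue_closure_general R Rbar A B ι hsplit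
end
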